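/- arXiv:2409.19815 — 6 statements merged into one kernel-verified Lean document; each statement's English description precedes it below -/
import Mathlib

section
/- Let q be nonzero in a field F with (q-q^{-1})(q^2-q^{-2}) ≠ 0, a ∈ F nonzero, d ∈ ℕ. Define θ_i = a q^{d-2i} + a^{-1} q^{2i-d} and t_i = a^{2i-d} q^{2i(d-i)} for 0 ≤ i ≤ d. Then for all i, j with 0 ≤ i, j ≤ d and |i - j| = 1, one has t_j/t_i = 1 + ((θ_i - θ_j)/(q - q^{-1})) · ((q θ_i - q^{-1} θ_j)/(q^2 - q^{-2})). -/
/-!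
Put u_i = a q^(d-2i). Then θ_i = u_i + u_i⁻¹, u_i = u_(i+1) q² and t_(i+1)/t_i = u_i u_(i+1).
For u = w q² the two quotients factor as (θ(u) - θ(w))/(q - q⁻¹) = wq - (wq)⁻¹ and
(qθ(u) - q⁻¹θ(w))/(q² - q⁻²) = wq, where θ(x) = x + x⁻¹, so the right-hand side is
1 + (wq)² - 1 = uw; the case w = u q² is the same computation.
-/

section

variable {F : Type*} [Field F] {q : F}

theorem one_add_div_mul_div_of_eq_mul_sq (hq : q ≠ 0) (hq1 : q - q⁻¹ ≠ 0)
    (hq2 : q ^ 2 - q⁻¹ ^ 2 ≠ 0) {u w : F} (hw : w ≠ 0) (hu : u = w * q ^ 2) :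
    1 + ((u + u⁻¹) - (w + w⁻¹)) / (q - q⁻¹) *
      ((q * (u + u⁻¹) - q⁻¹ * (w + w⁻¹)) / (q ^ 2 - q⁻¹ ^ 2)) = u * w := by
  subst hu
  have hdiff : (w * q ^ 2 + (w * q ^ 2)⁻¹ - (w + w⁻¹)) / (q - q⁻¹) = w * q - (w * q)⁻¹ := by
    rw [div_eq_iff hq1]; field_simp; ring
  have hqdiff : (q * (w * q ^ 2 + (w * q ^ 2)⁻¹) - q⁻¹ * (w + w⁻¹)) / (q ^ 2 - q⁻¹ ^ 2) =
      w * q := by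
    rw [div_eq_iff hq2]; field_simp; ring
  rw [hdiff, hqdiff]
  field_simp
  ring

theorem one_add_div_mul_div_of_mul_sq_eq (hq : q ≠ 0) (hq1 : q - q⁻¹ ≠ 0)
    (hq2 : q ^ 2 - q⁻¹ ^ 2 ≠ 0) {u w : F} (hu : u ≠ 0) (hw : w = u * q ^ 2) :
    1 + ((u + u⁻¹) - (w + w⁻¹)) / (q - q⁻¹) *
      ((q * (u + u⁻¹) - q⁻¹ * (w + w⁻¹)) / (q ^ 2 - q⁻¹ ^ 2)) = (u * w)⁻¹ := by
  subst hw
  have hdiff : (u + u⁻¹ - (u * q ^ 2 + (u * q ^ 2)⁻¹)) / (q - q⁻¹) = (u * q)⁻¹ - u * q := by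
    rw [div_eq_iff hq1]; field_simp; ring
  have hqdiff : (q * (u + u⁻¹) - q⁻¹ * (u * q ^ 2 + (u * q ^ 2)⁻¹)) / (q ^ 2 - q⁻¹ ^ 2) =
      (u * q)⁻¹ := by
    rw [div_eq_iff hq2]; field_simp; ring
  rw [hdiff, hqdiff]
  field_simp
  ring

end

section

variable {F : Type*} [Field F] {q : F} (a : F) (d : ℕ)

theorem mul_zpow_add_inv_mul_zpow (i : ℕ) :
    a * q ^ ((d : ℤ) - 2 * i) + a⁻¹ * q ^ (2 * (i : ℤ) - d) =
      a * q ^ ((d : ℤ) - 2 * i) + (a * q ^ ((d : ℤ) - 2 * i))⁻¹ := by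
  rw [mul_inv, ← zpow_neg, neg_sub]

theorem mul_zpow_succ_mul_sq (hq : q ≠ 0) (i : ℕ) :
    a * q ^ ((d : ℤ) - 2 * ↑(i + 1)) * q ^ 2 = a * q ^ ((d : ℤ) - 2 * i) := by
  rw [mul_assoc, ← zpow_natCast, ← zpow_add₀ hq]
  push_cast
  ring_nf

theorem zpow_mul_pow_succ_div (hq : q ≠ 0) (ha : a ≠ 0) {i : ℕ} (hi : i + 1 ≤ d) :
    a ^ (2 * (↑(i + 1) : ℤ) - d) * q ^ (2 * (i + 1) * (d - (i + 1))) /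
        (a ^ (2 * (i : ℤ) - d) * q ^ (2 * i * (d - i))) =
      a * q ^ ((d : ℤ) - 2 * i) * (a * q ^ ((d : ℤ) - 2 * ↑(i + 1))) := by
  rw [div_eq_iff (by positivity), mul_comm _ (a ^ _ * _)]
  have hexp : ((2 * (i + 1) * (d - (i + 1)) : ℕ) : ℤ) =
      ((2 * i * (d - i) : ℕ) : ℤ) + (((d : ℤ) - 2 * i) + ((d : ℤ) - 2 * ↑(i + 1))) := by
    push_cast [Nat.cast_sub hi, Nat.cast_sub (Nat.le_of_succ_le hi)]
    ring
  rw [← zpow_natCast q, hexp, zpow_add₀ hq, zpow_add₀ hq, zpow_natCast,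
    show 2 * (↑(i + 1) : ℤ) - d = (2 * i - d) + 1 + 1 by push_cast; ring,
    zpow_add_one₀ ha, zpow_add_one₀ ha]
  ring

end

theorem stmt_6 {F : Type*} [Field F] (q : F) (hq : q ≠ 0)
    (hq1 : q - q⁻¹ ≠ 0) (hq2 : q^2 - q⁻¹^2 ≠ 0)
    (a : F) (ha : a ≠ 0) (d : ℕ)
    (θ : ℕ → F)
    (hθ : ∀ i : ℕ, i ≤ d →
      θ i = a * q ^ ((d : ℤ) - 2 * i) + a⁻¹ * q ^ (2 * (i : ℤ) - d))
    (t : ℕ → F)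
    (ht : ∀ i : ℕ, i ≤ d → t i = a ^ (2 * (i : ℤ) - d) * q ^ (2 * i * (d - i)))
    (i j : ℕ) (hi : i ≤ d) (hj : j ≤ d) (hij : i = j + 1 ∨ j = i + 1) :
    t j / t i = 1 + (θ i - θ j) / (q - q⁻¹) * ((q * θ i - q⁻¹ * θ j) / (q^2 - q⁻¹^2)) := by
  set u : ℕ → F := fun k ↦ a * q ^ ((d : ℤ) - 2 * k)
  have hu : ∀ k, u k ≠ 0 := fun k ↦ by positivity
  have hθu : ∀ k ≤ d, θ k = u k + (u k)⁻¹ := fun k hk ↦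
    (hθ k hk).trans (mul_zpow_add_inv_mul_zpow a d k)
  have hstep : ∀ k, u k = u (k + 1) * q ^ 2 := fun k ↦ (mul_zpow_succ_mul_sq a d hq k).symm
  have hratio : ∀ k, k + 1 ≤ d → t (k + 1) / t k = u k * u (k + 1) := fun k hk ↦ by
    rw [ht k (Nat.le_of_succ_le hk), ht (k + 1) hk]
    exact zpow_mul_pow_succ_div a d hq ha hk
  rcases hij with rfl | rfl
  · rw [hθu _ hi, hθu _ hj, one_add_div_mul_div_of_mul_sq_eq hq hq1 hq2 (hu _) (hstep j),
      mul_comm (u _), ← hratio j hi, inv_div]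
  · rw [hθu _ hi, hθu _ hj, one_add_div_mul_div_of_eq_mul_sq hq hq1 hq2 (hu _) (hstep i),
      hratio i hj]
end

section
/- Let V be a finite-dimensional vector space over a field F, let A ∈ End(V) be diagonalizable with eigenvalues θ_0,...,θ_d and corresponding primitive idempotents E_0,...,E_d (projections onto the eigenspaces). Let B ∈ End(V) satisfy A^3 B - [3]_q A^2 B A + [3]_q A B A^2 - B A^3 = (q^2-q^{-2})^2 (BA - AB), where [3]_q = q^2 + q^{-2} + 1. Then for all 0 ≤ i, j ≤ d: E_i B E_j (θ_i - θ_j) P(θ_i, θ_j) = 0, where P(x,y) = x^2 - (q^2+q^{-2})xy + y^2 + (q^2-q^{-2})^2. -/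
/-!
Sandwiching the Dolan–Grady relation between `E i` and `E j` turns every word `A^m B A^n`
into the scalar multiple `θ i ^ m * θ j ^ n` of `E i * B * E j`, so the relation collapses to
a scalar polynomial in `θ i, θ j` times `E i * B * E j`; that polynomial factors as
`(θ i - θ j) * P (θ i) (θ j)`.
-/

section Sandwich

variable {F R : Type*} [CommRing F] [Ring R] [Algebra F R] {a e f : R} {α β : F}

theorem mul_pow_eq_smul_of_mul_eq_smul (he : e * a = α • e) (n : ℕ) :
    e * a ^ n = α ^ n • e := by
  induction n with
  | zero => simp
  | succ n ih => rw [pow_succ, ← mul_assoc, ih, smul_mul_assoc, he, smul_smul, pow_succ]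

theorem pow_mul_eq_smul_of_mul_eq_smul (hf : a * f = β • f) (n : ℕ) :
    a ^ n * f = β ^ n • f := by
  induction n with
  | zero => simp
  | succ n ih => rw [pow_succ', mul_assoc, ih, mul_smul_comm, hf, smul_smul, ← pow_succ]

theorem mul_pow_mul_pow_mul_eq_smul (he : e * a = α • e) (hf : a * f = β • f) (b : R)
    (m n : ℕ) : e * (a ^ m * b * a ^ n) * f = (α ^ m * β ^ n) • (e * b * f) := by
  calc e * (a ^ m * b * a ^ n) * f = (e * a ^ m) * b * (a ^ n * f) := by noncomm_ring
    _ = (α ^ m * β ^ n) • (e * b * f) := by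
      rw [mul_pow_eq_smul_of_mul_eq_smul he, pow_mul_eq_smul_of_mul_eq_smul hf,
        smul_mul_assoc, smul_mul_assoc, mul_smul_comm, smul_smul]

theorem smul_mul_mul_eq_zero_of_dolanGrady (he : e * a = α • e) (hf : a * f = β • f)
    {b : R} {s t : F}
    (hDG : a ^ 3 * b - s • (a ^ 2 * b * a) + s • (a * b * a ^ 2) - b * a ^ 3
      = t • (b * a - a * b)) :
    ((α - β) * (α ^ 2 - (s - 1) * α * β + β ^ 2 + t)) • (e * b * f) = 0 := by
  have hWords : a ^ 3 * b * a ^ 0 - s • (a ^ 2 * b * a ^ 1) + s • (a ^ 1 * b * a ^ 2)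
      - a ^ 0 * b * a ^ 3 = t • (a ^ 0 * b * a ^ 1 - a ^ 1 * b * a ^ 0) := by
    simpa only [pow_zero, pow_one, mul_one, one_mul] using hDG
  have hSandwich := congrArg (e * · * f) hWords
  simp only [mul_add, add_mul, mul_sub, sub_mul, mul_smul_comm, smul_mul_assoc,
    mul_pow_mul_pow_mul_eq_smul he hf] at hSandwich
  linear_combination (norm := module) hSandwich

end Sandwich

theorem stmt_7_general {F : Type*} [Field F] (q : F)
    {V : Type*} [AddCommGroup V] [Module F V]
    (d : ℕ) (θ : Fin (d + 1) → F)
    (A B : Module.End F V) (E : Fin (d + 1) → Module.End F V)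
    (hAE : ∀ i, A * E i = θ i • E i)
    (hEA : ∀ i, E i * A = θ i • E i)
    (hDG : A^3 * B - (q^2 + q⁻¹^2 + 1) • (A^2 * B * A) + (q^2 + q⁻¹^2 + 1) • (A * B * A^2)
           - B * A^3 = (q^2 - q⁻¹^2)^2 • (B * A - A * B))
    (i j : Fin (d + 1)) :
    ((θ i - θ j) * ((θ i)^2 - (q^2 + q⁻¹^2) * θ i * θ j + (θ j)^2 + (q^2 - q⁻¹^2)^2))
      • (E i * B * E j) = 0 := by
  have h := smul_mul_mul_eq_zero_of_dolanGrady (hEA i) (hAE j) hDG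
  rwa [add_sub_cancel_right] at h

theorem stmt_7 {F : Type*} [Field F] (q : F) (hq : q ≠ 0)
    {V : Type*} [AddCommGroup V] [Module F V] [FiniteDimensional F V]
    (d : ℕ) (θ : Fin (d + 1) → F)
    (A B : Module.End F V) (E : Fin (d + 1) → Module.End F V)
    (hEE : ∀ i j, E i * E j = if i = j then E i else 0)
    (hsum : ∑ i, E i = 1)
    (hAE : ∀ i, A * E i = θ i • E i)
    (hEA : ∀ i, E i * A = θ i • E i)
    (hDG : A^3 * B - (q^2 + q⁻¹^2 + 1) • (A^2 * B * A) + (q^2 + q⁻¹^2 + 1) • (A * B * A^2)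
           - B * A^3 = (q^2 - q⁻¹^2)^2 • (B * A - A * B))
    (i j : Fin (d + 1)) :
    ((θ i - θ j) * ((θ i)^2 - (q^2 + q⁻¹^2) * θ i * θ j + (θ j)^2 + (q^2 - q⁻¹^2)^2))
      • (E i * B * E j) = 0 :=
  stmt_7_general q d θ A B E hAE hEA hDG i j
end

section
/- Let F be a field, n ∈ F nonzero with n ≠ 1 and n ≠ 2. Define Λ_1 = E^{(1)}E^{(2)}, Λ_2 = E^{(1)} - Λ_1, Λ_3 = E^{(2)} - Λ_1, Λ_4 = E^{(3)} - Λ_1, Λ_5 = I - Λ_1 - Λ_2 - Λ_3 - Λ_4, and Λ*_1 = E^{*(1)}E^{*(2)}, using the six explicit 5×5 matrices E^{(i)}, E^{*(i)}. Then the 25 matrices Λ_i Λ*_1 Λ_j (1 ≤ i,j ≤ 5) form a basis of Mat_5(F); in particular, the subalgebra of Mat_5(F) generated by E^{(1)}, E^{(2)}, E^{(3)}, E^{*(1)}, E^{*(2)}, E^{*(3)} is all of Mat_5(F). -/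
open Matrix

set_option linter.unusedVariables false
set_option maxHeartbeats 2000000


def Emat {F : Type*} [Field F] (n : F) : Fin 3 → Matrix (Fin 5) (Fin 5) F :=
  ![!![1,0,1,1,0; 0,1,0,0,1; 0,0,0,0,0; 0,0,0,0,0; 0,0,0,0,0],
    !![1,1,0,1,0; 0,0,0,0,0; 0,0,1,0,1; 0,0,0,0,0; 0,0,0,0,0],
    !![1,1,1,0,0; 0,0,0,0,0; 0,0,0,0,0; 0,0,0,1,1; 0,0,0,0,0]]

def Estar {F : Type*} [Field F] (n : F) : Fin 3 → Matrix (Fin 5) (Fin 5) F :=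
  ![!![0,0,0,0,0; n⁻¹,1,0,0,0; 0,0,0,0,0; 0,0,0,0,0; 0,0,n⁻¹,n⁻¹,1],
    !![0,0,0,0,0; 0,0,0,0,0; n⁻¹,0,1,0,0; 0,0,0,0,0; 0,n⁻¹,0,n⁻¹,1],
    !![0,0,0,0,0; 0,0,0,0,0; 0,0,0,0,0; n⁻¹,0,0,1,0; 0,n⁻¹,n⁻¹,0,1]]

section Aux

variable {F : Type*} [Field F]

lemma aux_mul_vecMulVec_mul (A B : Matrix (Fin 5) (Fin 5) F) (x y : Fin 5 → F) :
    A * vecMulVec x y * B = vecMulVec (A *ᵥ x) (y ᵥ* B) := by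
  ext i j
  simp [Matrix.mul_apply, vecMulVec_apply, mulVec, vecMul, dotProduct, Fin.sum_univ_five]
  ring

lemma aux_std_vecMulVec (i j : Fin 5) :
    Matrix.single i j (1:F) = vecMulVec (Pi.single i 1) (Pi.single j 1) := by
  ext a b
  by_cases h1 : i = a <;> by_cases h2 : j = b <;>
    simp [Matrix.single, vecMulVec_apply, Pi.single_apply, h1, h2, eq_comm]

end Aux

theorem stmt_15 {F : Type*} [Field F] (n : F) (hn : n ≠ 0) (hn1 : n ≠ 1) (hn2 : n ≠ 2) :
    let Λ : Fin 5 → Matrix (Fin 5) (Fin 5) F :=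
      ![Emat n 0 * Emat n 1,
        Emat n 0 - Emat n 0 * Emat n 1,
        Emat n 1 - Emat n 0 * Emat n 1,
        Emat n 2 - Emat n 0 * Emat n 1,
        1 - (Emat n 0 * Emat n 1) - (Emat n 0 - Emat n 0 * Emat n 1)
          - (Emat n 1 - Emat n 0 * Emat n 1) - (Emat n 2 - Emat n 0 * Emat n 1)]
    let Λs : Matrix (Fin 5) (Fin 5) F := Estar n 0 * Estar n 1
    let B : Fin 5 × Fin 5 → Matrix (Fin 5) (Fin 5) F := fun p => Λ p.1 * Λs * Λ p.2
    (LinearIndependent F B ∧ Submodule.span F (Set.range B) = ⊤) ∧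
    Algebra.adjoin F {Emat n 0, Emat n 1, Emat n 2, Estar n 0, Estar n 1, Estar n 2} = ⊤ := by
  have hm : n - 1 ≠ 0 := sub_ne_zero.mpr hn1
  have hk : n - 2 ≠ 0 := sub_ne_zero.mpr hn2
  intro Λ Λs B
  set q : F := n⁻¹ * n⁻¹ with hq
  -- literal forms of the Λ's
  have e01 : Emat n 0 * Emat n 1 =
      (!![1,1,1,1,1; 0,0,0,0,0; 0,0,0,0,0; 0,0,0,0,0; 0,0,0,0,0] : Matrix (Fin 5) (Fin 5) F) := by
    ext a b
    fin_cases a <;> fin_cases b <;>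
      simp [Emat, Matrix.mul_apply, Fin.sum_univ_five, Matrix.vecHead, Matrix.vecTail]
  have l1 : Emat n 0 - Emat n 0 * Emat n 1 =
      (!![0,-1,0,0,-1; 0,1,0,0,1; 0,0,0,0,0; 0,0,0,0,0; 0,0,0,0,0] :
        Matrix (Fin 5) (Fin 5) F) := by
    rw [e01]; ext a b
    fin_cases a <;> fin_cases b <;>
      simp [Emat, Matrix.sub_apply, Matrix.vecHead, Matrix.vecTail]
  have l2 : Emat n 1 - Emat n 0 * Emat n 1 =
      (!![0,0,-1,0,-1; 0,0,0,0,0; 0,0,1,0,1; 0,0,0,0,0; 0,0,0,0,0] :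
        Matrix (Fin 5) (Fin 5) F) := by
    rw [e01]; ext a b
    fin_cases a <;> fin_cases b <;>
      simp [Emat, Matrix.sub_apply, Matrix.vecHead, Matrix.vecTail]
  have l3 : Emat n 2 - Emat n 0 * Emat n 1 =
      (!![0,0,0,-1,-1; 0,0,0,0,0; 0,0,0,0,0; 0,0,0,1,1; 0,0,0,0,0] :
        Matrix (Fin 5) (Fin 5) F) := by
    rw [e01]; ext a b
    fin_cases a <;> fin_cases b <;>
      simp [Emat, Matrix.sub_apply, Matrix.vecHead, Matrix.vecTail]
  have l4 : 1 - (Emat n 0 * Emat n 1) - (Emat n 0 - Emat n 0 * Emat n 1)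
        - (Emat n 1 - Emat n 0 * Emat n 1) - (Emat n 2 - Emat n 0 * Emat n 1) =
      (!![0,0,0,0,2; 0,0,0,0,-1; 0,0,0,0,-1; 0,0,0,0,-1; 0,0,0,0,1] :
        Matrix (Fin 5) (Fin 5) F) := by
    rw [e01]; ext a b
    fin_cases a <;> fin_cases b <;>
      simp [Emat, Matrix.sub_apply, Matrix.one_apply, Matrix.vecHead, Matrix.vecTail,
        Fin.ext_iff] <;> norm_num
  have hΛlit : Λ = ![
      !![1,1,1,1,1; 0,0,0,0,0; 0,0,0,0,0; 0,0,0,0,0; 0,0,0,0,0],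
      !![0,-1,0,0,-1; 0,1,0,0,1; 0,0,0,0,0; 0,0,0,0,0; 0,0,0,0,0],
      !![0,0,-1,0,-1; 0,0,0,0,0; 0,0,1,0,1; 0,0,0,0,0; 0,0,0,0,0],
      !![0,0,0,-1,-1; 0,0,0,0,0; 0,0,0,0,0; 0,0,0,1,1; 0,0,0,0,0],
      !![0,0,0,0,2; 0,0,0,0,-1; 0,0,0,0,-1; 0,0,0,0,-1; 0,0,0,0,1]] := by
    funext i
    fin_cases i
    · exact e01
    · exact l1
    · exact l2
    · exact l3
    · exact l4
  have hLs : Λs = vecMulVec ![0,0,0,0,1] ![q, n⁻¹, n⁻¹, n⁻¹, 1] := by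
    show Estar n 0 * Estar n 1 = _
    ext i j
    fin_cases i <;> fin_cases j <;>
      simp [Estar, Matrix.mul_apply, Fin.sum_univ_five, vecMulVec_apply,
        Matrix.vecHead, Matrix.vecTail, hq]
  set u : Fin 5 → Fin 5 → F :=
    ![![1,0,0,0,0], ![-1,1,0,0,0], ![-1,0,1,0,0], ![-1,0,0,1,0], ![2,-1,-1,-1,1]] with hu_def
  set v : Fin 5 → Fin 5 → F :=
    ![![q,q,q,q,q], ![0,(n-1)*q,0,0,(n-1)*q], ![0,0,(n-1)*q,0,(n-1)*q],
      ![0,0,0,(n-1)*q,(n-1)*q], ![0,0,0,0,(n-1)*((n-2)*q)]] with hv_def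
  have hu : ∀ i : Fin 5, Λ i *ᵥ ![0,0,0,0,1] = u i := by
    intro i
    rw [hΛlit]
    fin_cases i <;> (funext a; fin_cases a) <;>
      simp [hu_def, mulVec, dotProduct, Fin.sum_univ_five, Matrix.vecHead, Matrix.vecTail]
  have hv : ∀ j : Fin 5, ![q, n⁻¹, n⁻¹, n⁻¹, 1] ᵥ* Λ j = v j := by
    intro j
    rw [hΛlit]
    fin_cases j <;> (funext b; fin_cases b) <;>
      (simp [hv_def, hq, vecMul, dotProduct, Fin.sum_univ_five, Matrix.vecHead,
        Matrix.vecTail] <;>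
        (try linear_combination (3*n⁻¹ - n*n⁻¹ - 1) * (mul_inv_cancel₀ hn)) <;>
        (try field_simp) <;> (try ring))
  set P : Matrix (Fin 5) (Fin 5) F := Matrix.of (fun a i => u i a) with hP_def
  set Q : Matrix (Fin 5) (Fin 5) F := Matrix.of v with hQ_def
  set Pi' : Matrix (Fin 5) (Fin 5) F :=
    !![1,1,1,1,1; 0,1,0,0,1; 0,0,1,0,1; 0,0,0,1,1; 0,0,0,0,1] with hPi_def
  set s : F := n * n * (n-1)⁻¹ with hs
  set t : F := n * n * ((n-1)⁻¹ * (n-2)⁻¹) with ht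
  set Qi : Matrix (Fin 5) (Fin 5) F :=
    !![n*n, -s, -s, -s, 2*t; 0, s, 0, 0, -t; 0, 0, s, 0, -t; 0, 0, 0, s, -t; 0, 0, 0, 0, t]
    with hQi_def
  have hPPi : P * Pi' = 1 := by
    ext a b
    fin_cases a <;> fin_cases b <;>
      simp [hP_def, hPi_def, hu_def, Matrix.mul_apply, Fin.sum_univ_five,
        Matrix.vecHead, Matrix.vecTail, Matrix.one_apply, Fin.ext_iff] <;> norm_num
  have hPiP : Pi' * P = 1 := by
    ext a b
    fin_cases a <;> fin_cases b <;>
      simp [hP_def, hPi_def, hu_def, Matrix.mul_apply, Fin.sum_univ_five,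
        Matrix.vecHead, Matrix.vecTail, Matrix.one_apply, Fin.ext_iff] <;> norm_num
  have hQQi : Q * Qi = 1 := by
    ext a b
    fin_cases a <;> fin_cases b <;>
      (simp [hQ_def, hQi_def, hv_def, hq, hs, ht, Matrix.mul_apply, Fin.sum_univ_five,
        Matrix.vecHead, Matrix.vecTail, Matrix.one_apply, Fin.ext_iff] <;> (try field_simp) <;> (try ring))
  have hQiQ : Qi * Q = 1 := by
    ext a b
    fin_cases a <;> fin_cases b <;>
      (simp [hQ_def, hQi_def, hv_def, hq, hs, ht, Matrix.mul_apply, Fin.sum_univ_five,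
        Matrix.vecHead, Matrix.vecTail, Matrix.one_apply, Fin.ext_iff] <;> (try field_simp) <;> (try ring))
  have hPcol : ∀ i : Fin 5, P *ᵥ Pi.single i 1 = u i := by
    intro i; funext a; simp [hP_def, mulVec_single]
  have hQrow : ∀ j : Fin 5, Pi.single j 1 ᵥ* Q = v j := by
    intro j; funext b; simp [hQ_def, single_vecMul]
  have hfact : ∀ p : Fin 5 × Fin 5, B p = P * Matrix.single p.1 p.2 1 * Q := by
    rintro ⟨i, j⟩
    show Λ i * Λs * Λ j = _
    rw [hLs, aux_mul_vecMulVec_mul, hu i, hv j, aux_std_vecMulVec,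
      aux_mul_vecMulVec_mul, hPcol, hQrow]
  let e : Matrix (Fin 5) (Fin 5) F ≃ₗ[F] Matrix (Fin 5) (Fin 5) F :=
    { toFun := fun M => P * M * Q
      map_add' := by intro x y; noncomm_ring
      map_smul' := by intro c x; simp [Matrix.mul_smul, Matrix.smul_mul]
      invFun := fun M => Pi' * M * Qi
      left_inv := fun M => by
        have h : Pi' * (P * M * Q) * Qi = (Pi' * P) * M * (Q * Qi) := by noncomm_ring
        simp only [h, hPiP, hQQi, one_mul, mul_one]
      right_inv := fun M => by
        have h : P * (Pi' * M * Qi) * Q = (P * Pi') * M * (Qi * Q) := by noncomm_ring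
        simp only [h, hPPi, hQiQ, one_mul, mul_one] }
  let bb : Module.Basis (Fin 5 × Fin 5) F (Matrix (Fin 5) (Fin 5) F) :=
    (Matrix.stdBasis F (Fin 5) (Fin 5)).map e
  have hbb : ⇑bb = B := by
    funext p
    obtain ⟨i, j⟩ := p
    show e ((Matrix.stdBasis F (Fin 5) (Fin 5)) (i, j)) = B (i, j)
    rw [Matrix.stdBasis_eq_single, hfact]
    rfl
  have hspan : Submodule.span F (Set.range B) = ⊤ := hbb ▸ bb.span_eq
  constructor
  · exact ⟨hbb ▸ bb.linearIndependent, hspan⟩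
  · have h0 : Emat n 0 ∈ Algebra.adjoin F
        {Emat n 0, Emat n 1, Emat n 2, Estar n 0, Estar n 1, Estar n 2} :=
      Algebra.subset_adjoin (by simp)
    have h1 : Emat n 1 ∈ Algebra.adjoin F
        {Emat n 0, Emat n 1, Emat n 2, Estar n 0, Estar n 1, Estar n 2} :=
      Algebra.subset_adjoin (by simp)
    have h2 : Emat n 2 ∈ Algebra.adjoin F
        {Emat n 0, Emat n 1, Emat n 2, Estar n 0, Estar n 1, Estar n 2} :=
      Algebra.subset_adjoin (by simp)
    have hgen : ∀ i : Fin 5, Λ i ∈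
        Algebra.adjoin F {Emat n 0, Emat n 1, Emat n 2, Estar n 0, Estar n 1, Estar n 2} := by
      intro i
      fin_cases i <;>
        · show _ ∈ _
          first
            | exact mul_mem h0 h1
            | exact sub_mem h0 (mul_mem h0 h1)
            | exact sub_mem h1 (mul_mem h0 h1)
            | exact sub_mem h2 (mul_mem h0 h1)
            | exact sub_mem (sub_mem (sub_mem (sub_mem (one_mem _) (mul_mem h0 h1))
                (sub_mem h0 (mul_mem h0 h1))) (sub_mem h1 (mul_mem h0 h1)))
                (sub_mem h2 (mul_mem h0 h1))
    have hLsmem : Λs ∈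
        Algebra.adjoin F {Emat n 0, Emat n 1, Emat n 2, Estar n 0, Estar n 1, Estar n 2} :=
      mul_mem (Algebra.subset_adjoin (by simp)) (Algebra.subset_adjoin (by simp))
    have hBmem : ∀ p : Fin 5 × Fin 5, B p ∈
        Algebra.adjoin F {Emat n 0, Emat n 1, Emat n 2, Estar n 0, Estar n 1, Estar n 2} :=
      fun p => mul_mem (mul_mem (hgen p.1) hLsmem) (hgen p.2)
    rw [← Algebra.toSubmodule_eq_top, eq_top_iff, ← hspan]
    exact Submodule.span_le.mpr (by rintro x ⟨p, rfl⟩; exact hBmem p)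
end

section
/- Let F be a field, q ∈ F nonzero with (q-q^{-1})(q^2-q^{-2}) ≠ 0, and let A₀, X be elements of an associative F-algebra such that A₀^3 X - [3]_q A₀^2 X A₀ + [3]_q A₀ X A₀^2 - X A₀^3 = (q^2-q^{-2})^2 (X A₀ - A₀ X) where [3]_q = q^2+q^{-2}+1. Set Y = X + (q A₀^2 X - (q+q^{-1}) A₀ X A₀ + q^{-1} X A₀^2)/((q-q^{-1})(q^2-q^{-2})). Then Y also satisfies the same relation: A₀^3 Y - [3]_q A₀^2 Y A₀ + [3]_q A₀ Y A₀^2 - Y A₀^3 = (q^2-q^{-2})^2 (Y A₀ - A₀ Y). -/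
/-!
Both sides of the relation, and the passage from `X` to `Y`, are polynomials in the two commuting
operators `L = A₀ * ·` and `R = · * A₀`: the relation says `δ X = 0` for
`δ = L³ - [3]_q L²R + [3]_q LR² - R³ - (q² - q⁻²)² (R - L)`, and `Y = (1 + c P) X` with
`P = q L² - (q + q⁻¹) LR + q⁻¹ R²`. Polynomials in commuting operators commute, so
`δ Y = (1 + c P) (δ X) = 0`.
-/

open LinearMap

section Polynomials

variable {F E : Type*} [Field F] [Ring E] [Algebra F E]

theorem Commute.of_mem_adjoin_pair {u v x y : E} (huv : Commute u v)
    (hx : x ∈ Algebra.adjoin F {u, v}) (hy : y ∈ Algebra.adjoin F {u, v}) : Commute x y := by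
  refine Algebra.commute_of_mem_adjoin_of_forall_mem_commute hy fun b hb => ?_
  refine (Algebra.commute_of_mem_adjoin_of_forall_mem_commute hx fun c hc => ?_).symm
  rcases hb with rfl | rfl <;> rcases hc with rfl | rfl
  exacts [Commute.refl _, huv, huv.symm, Commute.refl _]

-- At `u = mulLeft F a`, `v = mulRight F a` these are the operators `δ` and `P` acting on `A`.
def qDolanGrady (q : F) (u v : E) : E :=
  u ^ 3 - (q ^ 2 + q⁻¹ ^ 2 + 1) • (u ^ 2 * v) + (q ^ 2 + q⁻¹ ^ 2 + 1) • (u * v ^ 2)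
    - v ^ 3 - (q ^ 2 - q⁻¹ ^ 2) ^ 2 • (v - u)

def qDolanGradyShift (q : F) (u v : E) : E :=
  q • u ^ 2 - (q + q⁻¹) • (u * v) + q⁻¹ • v ^ 2

theorem qDolanGrady_mem_adjoin (q : F) (u v : E) :
    qDolanGrady q u v ∈ Algebra.adjoin F {u, v} := by
  have hu : u ∈ Algebra.adjoin F {u, v} := Algebra.subset_adjoin (by simp)
  have hv : v ∈ Algebra.adjoin F {u, v} := Algebra.subset_adjoin (by simp)
  unfold qDolanGrady
  aesop (add safe apply [sub_mem, add_mem, mul_mem, pow_mem, Subalgebra.smul_mem])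

theorem qDolanGradyShift_mem_adjoin (q : F) (u v : E) :
    qDolanGradyShift q u v ∈ Algebra.adjoin F {u, v} := by
  have hu : u ∈ Algebra.adjoin F {u, v} := Algebra.subset_adjoin (by simp)
  have hv : v ∈ Algebra.adjoin F {u, v} := Algebra.subset_adjoin (by simp)
  unfold qDolanGradyShift
  aesop (add safe apply [sub_mem, add_mem, mul_mem, pow_mem, Subalgebra.smul_mem])

theorem Commute.qDolanGrady_qDolanGradyShift (q : F) {u v : E} (huv : Commute u v) :
    Commute (qDolanGrady q u v) (qDolanGradyShift q u v) :=
  huv.of_mem_adjoin_pair (qDolanGrady_mem_adjoin q u v) (qDolanGradyShift_mem_adjoin q u v)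

end Polynomials

section Multiplication

variable {F A : Type*} [Field F] [Ring A] [Algebra F A]

theorem qDolanGrady_mulLeft_mulRight_apply (q : F) (a x : A) :
    qDolanGrady q (mulLeft F a) (mulRight F a) x =
      a ^ 3 * x - (q ^ 2 + q⁻¹ ^ 2 + 1) • (a ^ 2 * x * a)
        + (q ^ 2 + q⁻¹ ^ 2 + 1) • (a * x * a ^ 2) - x * a ^ 3
        - (q ^ 2 - q⁻¹ ^ 2) ^ 2 • (x * a - a * x) := by
  simp [qDolanGrady, pow_mulLeft, pow_mulRight, mul_assoc]

theorem qDolanGradyShift_mulLeft_mulRight_apply (q : F) (a x : A) :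
    qDolanGradyShift q (mulLeft F a) (mulRight F a) x =
      q • (a ^ 2 * x) - (q + q⁻¹) • (a * x * a) + q⁻¹ • (x * a ^ 2) := by
  simp [qDolanGradyShift, pow_mulLeft, pow_mulRight, mul_assoc]

end Multiplication

theorem stmt_17_general {F : Type*} [Field F] (q : F)
    {A : Type*} [Ring A] [Algebra F A] (A₀ X : A)
    (hDG : A₀^3 * X - (q^2 + q⁻¹^2 + 1) • (A₀^2 * X * A₀)
        + (q^2 + q⁻¹^2 + 1) • (A₀ * X * A₀^2) - X * A₀^3
        = (q^2 - q⁻¹^2)^2 • (X * A₀ - A₀ * X)) :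
    let Y : A := X + ((q - q⁻¹) * (q^2 - q⁻¹^2))⁻¹ •
      (q • (A₀^2 * X) - (q + q⁻¹) • (A₀ * X * A₀) + q⁻¹ • (X * A₀^2))
    A₀^3 * Y - (q^2 + q⁻¹^2 + 1) • (A₀^2 * Y * A₀)
        + (q^2 + q⁻¹^2 + 1) • (A₀ * Y * A₀^2) - Y * A₀^3
        = (q^2 - q⁻¹^2)^2 • (Y * A₀ - A₀ * Y) := by
  intro Y
  set L := mulLeft F A₀
  set R := mulRight F A₀
  set c : F := ((q - q⁻¹) * (q^2 - q⁻¹^2))⁻¹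
  have hδX : qDolanGrady q L R X = 0 := by
    rw [qDolanGrady_mulLeft_mulRight_apply, hDG, sub_self]
  have hY : Y = (1 + c • qDolanGradyShift q L R) X := by
    rw [LinearMap.add_apply, Module.End.one_apply, LinearMap.smul_apply,
      qDolanGradyShift_mulLeft_mulRight_apply]
  have hcomm : Commute (qDolanGrady q L R) (1 + c • qDolanGradyShift q L R) :=
    (Commute.one_right _).add_right <|
      ((commute_mulLeft_right A₀ A₀).qDolanGrady_qDolanGradyShift q).smul_right c
  rw [← sub_eq_zero, ← qDolanGrady_mulLeft_mulRight_apply, hY, ← Module.End.mul_apply,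
    hcomm.eq, Module.End.mul_apply, hδX, map_zero]

theorem stmt_17 {F : Type*} [Field F] (q : F) (hq : q ≠ 0)
    (hq1 : q - q⁻¹ ≠ 0) (hq2 : q^2 - q⁻¹^2 ≠ 0)
    {A : Type*} [Ring A] [Algebra F A] (A₀ X : A)
    (hDG : A₀^3 * X - (q^2 + q⁻¹^2 + 1) • (A₀^2 * X * A₀)
        + (q^2 + q⁻¹^2 + 1) • (A₀ * X * A₀^2) - X * A₀^3
        = (q^2 - q⁻¹^2)^2 • (X * A₀ - A₀ * X)) :
    let Y : A := X + ((q - q⁻¹) * (q^2 - q⁻¹^2))⁻¹ •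
      (q • (A₀^2 * X) - (q + q⁻¹) • (A₀ * X * A₀) + q⁻¹ • (X * A₀^2))
    A₀^3 * Y - (q^2 + q⁻¹^2 + 1) • (A₀^2 * Y * A₀)
        + (q^2 + q⁻¹^2 + 1) • (A₀ * Y * A₀^2) - Y * A₀^3
        = (q^2 - q⁻¹^2)^2 • (Y * A₀ - A₀ * Y) :=
  stmt_17_general q A₀ X hDG
end

section
/- Let F be a field, q ∈ F nonzero, and V a finite-dimensional F-vector space. Suppose A, B ∈ End(V) with A diagonalizable having exactly two eigenvalues θ_0 = aq + a^{-1}q^{-1} and θ_1 = aq^{-1} + a^{-1}q (a ∈ F nonzero, a^2 ≠ 1, q^2 ≠ ±1), with primitive idempotents E_0, E_1, and suppose B satisfies A^3 B - [3]_q A^2 B A + [3]_q A B A^2 - B A^3 = (q^2-q^{-2})^2 (BA - AB). Define Ψ = a^{-1} E_0 + a E_1. Then Ψ^{-1} B Ψ = B + (q A^2 B - (q+q^{-1}) A B A + q^{-1} B A^2)/((q-q^{-1})(q^2-q^{-2})). -/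
set_option maxHeartbeats 1000000

private lemma stmt_18_aux01 {F : Type*} [Field F] (q a : F) (hq : q ≠ 0) (ha : a ≠ 0) :
    (q - q⁻¹) * (q ^ 2 - q⁻¹ ^ 2) * (a * a - 1)
      = q * ((a * q + a⁻¹ * q⁻¹) * (a * q + a⁻¹ * q⁻¹))
        - (q + q⁻¹) * ((a * q + a⁻¹ * q⁻¹) * (a * q⁻¹ + a⁻¹ * q))
        + q⁻¹ * ((a * q⁻¹ + a⁻¹ * q) * (a * q⁻¹ + a⁻¹ * q)) := by
  linear_combination (q⁻¹ - q⁻¹ * a * a⁻¹ + q - q * a * a⁻¹) * mul_inv_cancel₀ hq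
    + (-q⁻¹ + q⁻¹ ^ 3 - q + q ^ 3) * mul_inv_cancel₀ ha

private lemma stmt_18_aux10 {F : Type*} [Field F] (q a : F) (hq : q ≠ 0) (ha : a ≠ 0) :
    (q - q⁻¹) * (q ^ 2 - q⁻¹ ^ 2) * (a⁻¹ * a⁻¹ - 1)
      = q * ((a * q⁻¹ + a⁻¹ * q) * (a * q⁻¹ + a⁻¹ * q))
        - (q + q⁻¹) * ((a * q⁻¹ + a⁻¹ * q) * (a * q + a⁻¹ * q⁻¹))
        + q⁻¹ * ((a * q + a⁻¹ * q⁻¹) * (a * q + a⁻¹ * q⁻¹)) := by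
  linear_combination (q⁻¹ - q⁻¹ * a * a⁻¹ + q - q * a * a⁻¹) * mul_inv_cancel₀ hq
    + (-q⁻¹ + q⁻¹ ^ 3 - q + q ^ 3) * mul_inv_cancel₀ ha

theorem stmt_18 {F : Type*} [Field F] (q a : F) (hq : q ≠ 0) (ha : a ≠ 0)
    (ha2 : a ^ 2 ≠ 1) (hq4 : q ^ 4 ≠ 1)
    {V : Type*} [AddCommGroup V] [Module F V] [FiniteDimensional F V]
    (A B E₀ E₁ : Module.End F V)
    (h0 : E₀ * E₀ = E₀) (h1 : E₁ * E₁ = E₁)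
    (h01 : E₀ * E₁ = 0) (h10 : E₁ * E₀ = 0) (hsum : E₀ + E₁ = 1)
    (hA : A = (a * q + a⁻¹ * q⁻¹) • E₀ + (a * q⁻¹ + a⁻¹ * q) • E₁)
    (hDG : A^3 * B - (q^2 + q⁻¹^2 + 1) • (A^2 * B * A)
        + (q^2 + q⁻¹^2 + 1) • (A * B * A^2) - B * A^3
        = (q^2 - q⁻¹^2)^2 • (B * A - A * B)) :
    (a • E₀ + a⁻¹ • E₁) * B * (a⁻¹ • E₀ + a • E₁)
      = B + ((q - q⁻¹) * (q^2 - q⁻¹^2))⁻¹ •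
          (q • (A^2 * B) - (q + q⁻¹) • (A * B * A) + q⁻¹ • (B * A^2)) := by
  have hai : a * a⁻¹ = 1 := mul_inv_cancel₀ ha
  have s01 := stmt_18_aux01 q a hq ha
  have s10 := stmt_18_aux10 q a hq ha
  have hq2 : q ^ 2 ≠ 1 := by
    intro h; apply hq4; rw [show q ^ 4 = (q ^ 2) ^ 2 by ring, h]; ring
  have hd1 : q - q⁻¹ ≠ 0 := by
    have h : q - q⁻¹ = (q ^ 2 - 1) * q⁻¹ := by field_simp
    rw [h]
    exact mul_ne_zero (sub_ne_zero.mpr hq2) (inv_ne_zero hq)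
  have hd2 : q ^ 2 - q⁻¹ ^ 2 ≠ 0 := by
    have h : q ^ 2 - q⁻¹ ^ 2 = (q ^ 4 - 1) * (q⁻¹) ^ 2 := by field_simp
    rw [h]
    exact mul_ne_zero (sub_ne_zero.mpr hq4) (pow_ne_zero _ (inv_ne_zero hq))
  have hd : (q - q⁻¹) * (q ^ 2 - q⁻¹ ^ 2) ≠ 0 := mul_ne_zero hd1 hd2
  have e00 : ∀ x : Module.End F V, E₀ * (E₀ * x) = E₀ * x := by
    intro x; rw [← mul_assoc, h0]
  have e01 : ∀ x : Module.End F V, E₀ * (E₁ * x) = 0 := by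
    intro x; rw [← mul_assoc, h01, zero_mul]
  have e10 : ∀ x : Module.End F V, E₁ * (E₀ * x) = 0 := by
    intro x; rw [← mul_assoc, h10, zero_mul]
  have e11 : ∀ x : Module.End F V, E₁ * (E₁ * x) = E₁ * x := by
    intro x; rw [← mul_assoc, h1]
  have hB : B = E₀ * (B * E₀) + E₀ * (B * E₁) + E₁ * (B * E₀) + E₁ * (B * E₁) := by
    have h : (E₀ + E₁) * B * (E₀ + E₁) = B := by rw [hsum, one_mul, mul_one]
    rw [← h]
    simp only [mul_add, add_mul]
    simp only [mul_assoc, e00, e01, e10, e11, h0, h1, h01, h10, zero_mul, mul_zero,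
      zero_add, add_zero]
    abel
  have key : ((q - q⁻¹) * (q ^ 2 - q⁻¹ ^ 2)) •
      ((a • E₀ + a⁻¹ • E₁) * B * (a⁻¹ • E₀ + a • E₁) - B)
      = q • (A ^ 2 * B) - (q + q⁻¹) • (A * B * A) + q⁻¹ • (B * A ^ 2) := by
    rw [hA, hB]
    simp only [pow_two, mul_add, add_mul, smul_mul_assoc, mul_smul_comm, smul_smul, smul_add,
      mul_assoc, e00, e01, e10, e11, h0, h1, h01, h10, zero_mul, mul_zero, smul_zero,
      zero_add, add_zero, smul_sub]
    match_scalars <;>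
      first
        | ring1
        | linear_combination ((q - q⁻¹) * (q ^ 2 - q⁻¹ ^ 2)) * hai
        | linear_combination (-((q - q⁻¹) * (q ^ 2 - q⁻¹ ^ 2))) * hai
        | linear_combination s01
        | linear_combination -s01
        | linear_combination s10
        | linear_combination -s10
  calc (a • E₀ + a⁻¹ • E₁) * B * (a⁻¹ • E₀ + a • E₁)
      = B + ((q - q⁻¹) * (q ^ 2 - q⁻¹ ^ 2))⁻¹ • (((q - q⁻¹) * (q ^ 2 - q⁻¹ ^ 2)) •
          ((a • E₀ + a⁻¹ • E₁) * B * (a⁻¹ • E₀ + a • E₁) - B)) := by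
        rw [inv_smul_smul₀ hd]; abel
    _ = B + ((q - q⁻¹) * (q ^ 2 - q⁻¹ ^ 2))⁻¹ •
          (q • (A ^ 2 * B) - (q + q⁻¹) • (A * B * A) + q⁻¹ • (B * A ^ 2)) := by rw [key]
end

section
/- Let F be a field and n ∈ F nonzero. Let T* be the 5×5 matrix with rows (1,0,0,0,0),(n^{-1},1,0,0,0),(n^{-1},0,1,0,0),(n^{-1},0,0,1,0),(n^{-2},n^{-1},n^{-1},n^{-1},1). Then T* is invertible with inverse having rows (1,0,0,0,0),(-n^{-1},1,0,0,0),(-n^{-1},0,1,0,0),(-n^{-1},0,0,1,0),(2n^{-2},-n^{-1},-n^{-1},-n^{-1},1), and T* E^{*(1)} (T*)^{-1} = diag(0,1,0,0,1), T* E^{*(2)} (T*)^{-1} = diag(0,0,1,0,1), T* E^{*(3)} (T*)^{-1} = diag(0,0,0,1,1), where the E^{*(i)} are as defined. In particular each E^{*(i)} is diagonalizable. -/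
/-! The rows of `T*` are common left eigenvectors of the three `E^{*(i)}`, that is
`T* E^{*(i)} = Dᵢ T*` with `Dᵢ` diagonal, and conjugating by the unit `T*` gives
`T* E^{*(i)} (T*)⁻¹ = Dᵢ`. All entries are polynomials in `m = n⁻¹`, which is why `T*` and its
inverse are defined over any commutative ring. -/

open Matrix

set_option linter.unusedVariables false


section
variable {R : Type*} [CommRing R]

def Tstar (m : R) : Matrix (Fin 5) (Fin 5) R :=
  !![1,0,0,0,0; m,1,0,0,0; m,0,1,0,0; m,0,0,1,0; m^2,m,m,m,1]

def TstarInv (m : R) : Matrix (Fin 5) (Fin 5) R :=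
  !![1,0,0,0,0; -m,1,0,0,0; -m,0,1,0,0; -m,0,0,1,0; 2*m^2,-m,-m,-m,1]

theorem Tstar_mul_TstarInv (m : R) : Tstar m * TstarInv m = 1 := by
  ext i j
  fin_cases i <;> fin_cases j <;> simp [Tstar, TstarInv, mul_apply, Fin.sum_univ_five]
  all_goals ring

theorem TstarInv_mul_Tstar (m : R) : TstarInv m * Tstar m = 1 := by
  ext i j
  fin_cases i <;> fin_cases j <;> simp [Tstar, TstarInv, mul_apply, Fin.sum_univ_five]
  all_goals ring

def TstarUnit (m : R) : GL (Fin 5) R :=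
  ⟨Tstar m, TstarInv m, Tstar_mul_TstarInv m, TstarInv_mul_Tstar m⟩

end

def EstarDiag {R : Type*} [Zero R] [One R] : Fin 3 → Fin 5 → R :=
  ![![0,1,0,0,1], ![0,0,1,0,1], ![0,0,0,1,1]]

theorem Tstar_mul_Estar {F : Type*} [Field F] (n : F) (i : Fin 3) :
    Tstar n⁻¹ * Estar n i = diagonal (EstarDiag i) * Tstar n⁻¹ := by
  ext a b
  fin_cases i <;> fin_cases a <;> fin_cases b <;>
    simp [Tstar, Estar, EstarDiag, mul_apply, Fin.sum_univ_five]
  all_goals ring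

theorem TstarUnit_conj_Estar {F : Type*} [Field F] (n : F) (i : Fin 3) :
    (TstarUnit n⁻¹ : Matrix (Fin 5) (Fin 5) F) * Estar n i *
      (((TstarUnit n⁻¹)⁻¹ : GL (Fin 5) F) : Matrix (Fin 5) (Fin 5) F) =
      diagonal (EstarDiag i) :=
  (Units.mul_inv_eq_iff_eq_mul (TstarUnit n⁻¹)).2 (Tstar_mul_Estar n i)

theorem stmt_19_general {F : Type*} [Field F] (n : F) :
    let T : Matrix (Fin 5) (Fin 5) F :=
      !![1,0,0,0,0; n⁻¹,1,0,0,0; n⁻¹,0,1,0,0; n⁻¹,0,0,1,0; n⁻¹^2,n⁻¹,n⁻¹,n⁻¹,1]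
    let T' : Matrix (Fin 5) (Fin 5) F :=
      !![1,0,0,0,0; -n⁻¹,1,0,0,0; -n⁻¹,0,1,0,0; -n⁻¹,0,0,1,0; 2*n⁻¹^2,-n⁻¹,-n⁻¹,-n⁻¹,1]
    T * T' = 1 ∧ T' * T = 1 ∧
    T * Estar n 0 * T' = Matrix.diagonal ![0,1,0,0,1] ∧
    T * Estar n 1 * T' = Matrix.diagonal ![0,0,1,0,1] ∧
    T * Estar n 2 * T' = Matrix.diagonal ![0,0,0,1,1] ∧
    (∀ i : Fin 3, ∃ (P : GL (Fin 5) F) (dvec : Fin 5 → F),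
      (P : Matrix (Fin 5) (Fin 5) F) * Estar n i * ((P⁻¹ : GL (Fin 5) F) : Matrix (Fin 5) (Fin 5) F) = Matrix.diagonal dvec) :=
  ⟨Tstar_mul_TstarInv n⁻¹, TstarInv_mul_Tstar n⁻¹, TstarUnit_conj_Estar n 0,
    TstarUnit_conj_Estar n 1, TstarUnit_conj_Estar n 2,
    fun i => ⟨TstarUnit n⁻¹, EstarDiag i, TstarUnit_conj_Estar n i⟩⟩

theorem stmt_19 {F : Type*} [Field F] (n : F) (hn : n ≠ 0) :
    let T : Matrix (Fin 5) (Fin 5) F :=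
      !![1,0,0,0,0; n⁻¹,1,0,0,0; n⁻¹,0,1,0,0; n⁻¹,0,0,1,0; n⁻¹^2,n⁻¹,n⁻¹,n⁻¹,1]
    let T' : Matrix (Fin 5) (Fin 5) F :=
      !![1,0,0,0,0; -n⁻¹,1,0,0,0; -n⁻¹,0,1,0,0; -n⁻¹,0,0,1,0; 2*n⁻¹^2,-n⁻¹,-n⁻¹,-n⁻¹,1]
    T * T' = 1 ∧ T' * T = 1 ∧
    T * Estar n 0 * T' = Matrix.diagonal ![0,1,0,0,1] ∧
    T * Estar n 1 * T' = Matrix.diagonal ![0,0,1,0,1] ∧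
    T * Estar n 2 * T' = Matrix.diagonal ![0,0,0,1,1] ∧
    (∀ i : Fin 3, ∃ (P : GL (Fin 5) F) (dvec : Fin 5 → F),
      (P : Matrix (Fin 5) (Fin 5) F) * Estar n i * ((P⁻¹ : GL (Fin 5) F) : Matrix (Fin 5) (Fin 5) F) = Matrix.diagonal dvec) :=
  stmt_19_general n
end
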